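/- Let d ≥ 1 be an integer, σ > 0 and ε > 0 real. Let β, γ be multi-indices with |β+γ| = 6 and Δ(β+γ) ≤ 1, let j ∈ supp(β+γ), and let q : ℤ^d → ℂ satisfy sup_{a∈ℤ^d} |q_a|(1+⟨a⟩)^σ ≤ 2ε. Then |q^β conj(q)^γ| ≤ (2ε)^6 · (1+⟨j⟩)^{−σ} · (max(⟨j⟩, 2))^{−5σ}. -/

import Mathlib

open scoped BigOperators

noncomputable section

/-- ℓ¹ norm (as a natural number) of a lattice point in `ℤ^d`. -/
def norm1 {d : ℕ} (j : Fin d → ℤ) : ℕ := ∑ i, (j i).natAbs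

/-- `⟨j⟩ = max(|j|₁, 1)`. -/
def jbra {d : ℕ} (j : Fin d → ℤ) : ℕ := max (norm1 j) 1

/-- ℓ¹-diameter of a finite set of lattice points. -/
def diam1 {d : ℕ} (S : Finset (Fin d → ℤ)) : ℕ :=
  (S ×ˢ S).sup fun p => norm1 (p.1 - p.2)

/-- Multi-indices on `ℤ^d`: finitely supported functions to `ℕ`. -/
abbrev MIdx (d : ℕ) := (Fin d → ℤ) →₀ ℕ

/-- total weight `|m| = ∑ m_j` of a multi-index. -/
def wt {d : ℕ} (m : MIdx d) : ℕ := m.sum fun _ n => n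

/-- `Δ(m)`: ℓ¹-diameter of the support of a multi-index. -/
def mdiam {d : ℕ} (m : MIdx d) : ℕ := diam1 m.support

/-- the monomial `q^β * conj(q)^γ`. -/
def mono {d : ℕ} (q : (Fin d → ℤ) → ℂ) (β γ : MIdx d) : ℂ :=
  (β.prod fun a n => q a ^ n) * (γ.prod fun a n => (starRingEnd ℂ) (q a) ^ n)

/-- Index set of short-range degree-6 monomials. -/
abbrev PairIdx (d : ℕ) :=
  {p : MIdx d × MIdx d // wt (p.1 + p.2) = 6 ∧ mdiam (p.1 + p.2) ≤ 1}

/-! Every site `a` of the monomial lies within ℓ¹-distance `Δ(β+γ) ≤ 1` of `j`, so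
`max(⟨j⟩, 2) ≤ 1 + ⟨a⟩` and the weighted bound on `q` gives
`|q_a| ≤ 2ε max(⟨j⟩, 2)^{-σ}`. One of the six factors sits at `j` itself and is
bounded by `2ε (1 + ⟨j⟩)^{-σ}`. -/

open Finsupp

section MultiIndex

variable {d : ℕ}

lemma norm1_add_le (x y : Fin d → ℤ) : norm1 (x + y) ≤ norm1 x + norm1 y := by
  simp only [norm1, ← Finset.sum_add_distrib]
  exact Finset.sum_le_sum fun i _ => Int.natAbs_add_le _ _

lemma one_le_jbra (x : Fin d → ℤ) : 1 ≤ jbra x := le_max_right _ _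

lemma jbra_le_jbra_add_norm1_sub (a j : Fin d → ℤ) : jbra j ≤ jbra a + norm1 (j - a) := by
  have h : norm1 j ≤ norm1 a + norm1 (j - a) := by
    simpa using norm1_add_le a (j - a)
  simp only [jbra]
  omega

lemma max_jbra_two_le_one_add_jbra {a j : Fin d → ℤ} (h : norm1 (j - a) ≤ 1) :
    max (jbra j) 2 ≤ 1 + jbra a := by
  have := jbra_le_jbra_add_norm1_sub a j
  have := one_le_jbra a
  omega

lemma norm1_sub_le_mdiam {m : MIdx d} {a b : Fin d → ℤ} (ha : a ∈ m.support)
    (hb : b ∈ m.support) : norm1 (a - b) ≤ mdiam m :=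
  Finset.le_sup (f := fun p : (Fin d → ℤ) × (Fin d → ℤ) => norm1 (p.1 - p.2)) (b := (a, b))
    (Finset.mem_product.2 ⟨ha, hb⟩)

lemma norm_mono (q : (Fin d → ℤ) → ℂ) (β γ : MIdx d) :
    ‖mono q β γ‖ = (β + γ).prod fun a n => ‖q a‖ ^ n := by
  rw [prod_add_index' (by simp) fun _ _ _ => pow_add _ _ _, mono, norm_mul]
  simp [Finsupp.prod, norm_prod]

end MultiIndex

section ProdPow

variable {α R : Type*} [CommSemiring R] [PartialOrder R] [IsOrderedRing R]
  {m : α →₀ ℕ} {c : α → R} {K L : R}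

lemma Finsupp.prod_pow_le_pow_sum (hc : ∀ a, 0 ≤ c a) (hK : ∀ a ∈ m.support, c a ≤ K) :
    m.prod (fun a n => c a ^ n) ≤ K ^ m.sum (fun _ n => n) := by
  rw [Finsupp.prod, Finsupp.sum, ← Finset.prod_pow_eq_pow_sum]
  exact Finset.prod_le_prod (fun a _ => pow_nonneg (hc a) _)
    fun a ha => pow_le_pow_left₀ (hc a) (hK a ha) _

lemma Finsupp.prod_pow_le_mul_pow_sum_sub_one {j : α} (hc : ∀ a, 0 ≤ c a)
    (hK : ∀ a ∈ m.support, c a ≤ K) (hj : j ∈ m.support) (hL : c j ≤ L) :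
    m.prod (fun a n => c a ^ n) ≤ L * K ^ (m.sum (fun _ n => n) - 1) := by
  have hj1 : single j 1 ≤ m := single_le_iff.2 (Nat.one_le_iff_ne_zero.2 (mem_support_iff.1 hj))
  have hm : m = (m - single j 1) + single j 1 := (tsub_add_cancel_of_le hj1).symm
  have hK' : ∀ a ∈ (m - single j 1).support, c a ≤ K := fun a ha => hK a (support_tsub ha)
  rw [hm, prod_add_index' (by simp) fun _ _ _ => pow_add _ _ _,
    sum_add_index' (fun _ => rfl) fun _ _ _ => rfl]
  simp only [prod_single_index, sum_single_index, pow_zero, pow_one, Nat.add_sub_cancel]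
  rw [mul_comm]
  exact mul_le_mul hL (prod_pow_le_pow_sum hc hK')
    (Finset.prod_nonneg fun a _ => pow_nonneg (hc a) _) ((hc j).trans hL)

end ProdPow

lemma Real.le_mul_rpow_neg_of_mul_rpow_le {x v w C σ : ℝ} (hx : 0 ≤ x) (hv : 0 < v)
    (hvw : v ≤ w) (hσ : 0 ≤ σ) (h : x * w ^ σ ≤ C) : x ≤ C * v ^ (-σ) := by
  rw [Real.rpow_neg hv.le, ← div_eq_mul_inv, le_div_iff₀ (by positivity)]
  exact (mul_le_mul_of_nonneg_left (Real.rpow_le_rpow hv.le hvw hσ) hx).trans h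

theorem monomial_decay_bound_general
    (d : ℕ) (σ ε : ℝ) (hσ : 0 < σ)
    (β γ : MIdx d) (h6 : wt (β + γ) = 6) (h1 : mdiam (β + γ) ≤ 1)
    (j : Fin d → ℤ) (hj : j ∈ (β + γ).support)
    (q : (Fin d → ℤ) → ℂ)
    (hq : ∀ a, ‖q a‖ * (1 + (jbra a : ℝ)) ^ σ ≤ 2 * ε) :
    ‖mono q β γ‖
      ≤ (2 * ε) ^ 6 * (1 + (jbra j : ℝ)) ^ (-σ) *
          ((max (jbra j) 2 : ℕ) : ℝ) ^ (-(5 * σ)) := by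
  set M : ℝ := ((max (jbra j) 2 : ℕ) : ℝ)
  have hM : 0 < M := by positivity
  have hnear : ∀ a ∈ (β + γ).support, ‖q a‖ ≤ 2 * ε * M ^ (-σ) := by
    intro a ha
    have hMa : M ≤ 1 + (jbra a : ℝ) := by
      simp only [M]
      exact_mod_cast max_jbra_two_le_one_add_jbra ((norm1_sub_le_mdiam hj ha).trans h1)
    exact Real.le_mul_rpow_neg_of_mul_rpow_le (norm_nonneg _) hM hMa hσ.le (hq a)
  have hcentre : ‖q j‖ ≤ 2 * ε * (1 + (jbra j : ℝ)) ^ (-σ) :=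
    Real.le_mul_rpow_neg_of_mul_rpow_le (norm_nonneg _) (by positivity) le_rfl hσ.le (hq j)
  have hprod := prod_pow_le_mul_pow_sum_sub_one (fun a => norm_nonneg (q a)) hnear hj hcentre
  rw [show ((β + γ).sum fun _ n => n) = 6 from h6] at hprod
  calc ‖mono q β γ‖ ≤ 2 * ε * (1 + (jbra j : ℝ)) ^ (-σ) * (2 * ε * M ^ (-σ)) ^ 5 :=
        (norm_mono q β γ).trans_le hprod
    _ = _ := by
      rw [mul_pow, ← Real.rpow_mul_natCast hM.le]
      ring_nf

/-- estimate (5.5) of the paper.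
If `|β+γ| = 6`, `Δ(β+γ) ≤ 1`, `j ∈ supp(β+γ)` and `⫴q⫴_σ ≤ 2ε`, then
`|q^β conj(q)^γ| ≤ (2ε)^6 (1+⟨j⟩)^{-σ} (max(⟨j⟩,2))^{-5σ}`. -/
theorem monomial_decay_bound
    (d : ℕ) (hd : 1 ≤ d) (σ ε : ℝ) (hσ : 0 < σ) (hε : 0 < ε)
    (β γ : MIdx d) (h6 : wt (β + γ) = 6) (h1 : mdiam (β + γ) ≤ 1)
    (j : Fin d → ℤ) (hj : j ∈ (β + γ).support)
    (q : (Fin d → ℤ) → ℂ)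
    (hq : ∀ a, ‖q a‖ * (1 + (jbra a : ℝ)) ^ σ ≤ 2 * ε) :
    ‖mono q β γ‖
      ≤ (2 * ε) ^ 6 * (1 + (jbra j : ℝ)) ^ (-σ) *
          ((max (jbra j) 2 : ℕ) : ℝ) ^ (-(5 * σ)) :=
  monomial_decay_bound_general d σ ε hσ β γ h6 h1 j hj q hq
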